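/- Let p ≥ 1 and let X, Y ∈ R^{p×p} be positive definite matrices. Then the p̄×p̄ matrix V(X, Y) = D_p⁺ (∫_0^1 ∫_0^1 λ2 (Y + λ1 λ2 (X − Y))^{-1} ⊗ (Y + λ1 λ2 (X − Y))^{-1} dλ1 dλ2) (D_p⁺)ᵀ is positive definite. -/

import Mathlib

open MeasureTheory ProbabilityTheory Filter Matrix
open scoped Kronecker NNReal Topology

noncomputable section

namespace SEM

/-- Convergence in probability (indexed by `ℕ`). -/
def TendstoInProb {Ω E : Type*} [MeasurableSpace Ω] [PseudoMetricSpace E]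
    (μ : Measure Ω) (Y : ℕ → Ω → E) (c : E) : Prop :=
  ∀ ε : ℝ, 0 < ε →
    Tendsto (fun n => μ {ω | ε ≤ dist (Y n ω) c}) atTop (𝓝 0)

/-- Convergence in probability along `atTop` on `ℝ` (continuous-time index). -/
def TendstoInProbReal {Ω E : Type*} [MeasurableSpace Ω] [PseudoMetricSpace E]
    (μ : Measure Ω) (Y : ℝ → Ω → E) (c : E) : Prop :=
  ∀ ε : ℝ, 0 < ε →
    Tendsto (fun T => μ {ω | ε ≤ dist (Y T ω) c}) atTop (𝓝 0)

/-- Convergence in probability for matrix-valued statistics (joint, via the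
product-indexed function). -/
def TendstoInProbMat {Ω : Type*} [MeasurableSpace Ω] {I J : Type*} [Fintype I] [Fintype J]
    (μ : Measure Ω) (Y : ℕ → Ω → Matrix I J ℝ) (L : Matrix I J ℝ) : Prop :=
  TendstoInProb μ (fun (n : ℕ) (ω) => fun ij : I × J => Y n ω ij.1 ij.2) (fun ij => L ij.1 ij.2)

/-- Convergence in distribution, characterised through bounded continuous
test functions. -/
def TendstoInDist {Ω : Type*} [MeasurableSpace Ω] {E : Type*} [TopologicalSpace E]
    [MeasurableSpace E] (μ : Measure Ω) (Y : ℕ → Ω → E) (ν : Measure E) : Prop :=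
  ∀ g : BoundedContinuousFunction E ℝ,
    Tendsto (fun n => ∫ ω, g (Y n ω) ∂μ) atTop (𝓝 (∫ x, g x ∂ν))

/-- Convergence in distribution to the centered Gaussian law with covariance matrix `C`
(Cramér–Wold formulation: every linear functional converges in distribution to the
corresponding one-dimensional centered Gaussian law). -/
def TendstoInDistGaussian {Ω : Type*} [MeasurableSpace Ω] {I : Type*} [Fintype I]
    (μ : Measure Ω) (Y : ℕ → Ω → I → ℝ) (C : Matrix I I ℝ) : Prop :=
  ∀ a : I → ℝ,
    TendstoInDist μ (fun (n : ℕ) (ω) => ∑ i, a i * Y n ω i)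
      (gaussianReal 0 (Real.toNNReal (∑ i, ∑ j, a i * C i j * a j)))

/-- Density of the chi-squared distribution with `k` degrees of freedom. -/
def chiSquaredPDF (k : ℕ) (x : ℝ) : ℝ :=
  if 0 < x then
    x ^ ((k : ℝ) / 2 - 1) * Real.exp (-x / 2) /
      ((2 : ℝ) ^ ((k : ℝ) / 2) * Real.Gamma ((k : ℝ) / 2))
  else 0

/-- The chi-squared distribution with `k` degrees of freedom. -/
def chiSquared (k : ℕ) : Measure ℝ :=
  volume.withDensity fun x => ENNReal.ofReal (chiSquaredPDF k x)

/-- Upper `α`-point of the chi-squared distribution with `k` degrees of freedom. -/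
def chiSqUpperPoint (k : ℕ) (α : ℝ) : ℝ :=
  sInf {x : ℝ | ((chiSquared k) (Set.Ioi x)).toReal ≤ α}

/-- Index type for the half-vectorization of a `p × p` symmetric matrix:
pairs `(i, j)` with `j ≤ i`.  It has cardinality `p (p + 1) / 2`. -/
abbrev VechIdx (p : ℕ) := {ij : Fin p × Fin p // ij.2 ≤ ij.1}

/-- `p̄ = p (p + 1) / 2`. -/
def pbar (p : ℕ) : ℕ := p * (p + 1) / 2

/-- Half-vectorization of a square matrix. -/
def vech {p : ℕ} (A : Matrix (Fin p) (Fin p) ℝ) : VechIdx p → ℝ :=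
  fun ij => A ij.1.1 ij.1.2

/-- The duplication matrix `D_p`, characterised by `vec A = D_p (vech A)` for
symmetric `A`. -/
def dupMat (p : ℕ) : Matrix (Fin p × Fin p) (VechIdx p) ℝ :=
  Matrix.of fun ij kl =>
    if ij = kl.1 ∨ (ij.1 = kl.1.2 ∧ ij.2 = kl.1.1) then (1 : ℝ) else 0

/-- The Moore–Penrose inverse `D_p⁺ = (D_pᵀ D_p)⁻¹ D_pᵀ` of the duplication matrix. -/
def dupPinv (p : ℕ) : Matrix (VechIdx p) (Fin p × Fin p) ℝ :=
  ((dupMat p)ᵀ * dupMat p)⁻¹ * (dupMat p)ᵀ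

/-- The asymptotic covariance matrix `W(Σ) = 2 D_p⁺ (Σ ⊗ Σ) (D_p⁺)ᵀ`. -/
def Wmat {p : ℕ} (S : Matrix (Fin p) (Fin p) ℝ) : Matrix (VechIdx p) (VechIdx p) ℝ :=
  (2 : ℝ) • (dupPinv p * (S ⊗ₖ S) * (dupPinv p)ᵀ)

/-- The discrepancy function
`F(Q, Σ) = log det Σ − log det Q + tr (Σ⁻¹ Q) − p`. -/
def Fdisc {p : ℕ} (Q S : Matrix (Fin p) (Fin p) ℝ) : ℝ :=
  Real.log S.det - Real.log Q.det + (S⁻¹ * Q).trace - p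

/-- The weight matrix
`V(Q, Σ) = D_p⁺ (∫₀¹∫₀¹ λ₂ (Σ + λ₁λ₂(Q − Σ))⁻¹ ⊗ (Σ + λ₁λ₂(Q − Σ))⁻¹ dλ₁ dλ₂) (D_p⁺)ᵀ`. -/
def Vmat {p : ℕ} (Q S : Matrix (Fin p) (Fin p) ℝ) : Matrix (VechIdx p) (VechIdx p) ℝ :=
  dupPinv p *
    (Matrix.of fun ij kl =>
      ∫ l1 in (0:ℝ)..1, ∫ l2 in (0:ℝ)..1,
        l2 * (((S + (l1 * l2) • (Q - S))⁻¹ ⊗ₖ (S + (l1 * l2) • (Q - S))⁻¹) ij kl)) *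
    (dupPinv p)ᵀ

open scoped Classical in
/-- `Ṽ(Q, Σ)`: equal to `V(Q, Σ)` when `Q` is nonsingular, the identity otherwise. -/
def Vtilde {p : ℕ} (Q S : Matrix (Fin p) (Fin p) ℝ) : Matrix (VechIdx p) (VechIdx p) ℝ :=
  if IsUnit Q.det then Vmat Q S else 1

/-- The contrast function
`F̃(Q, Σ) = (vech Q − vech Σ)ᵀ Ṽ(Q, Σ) (vech Q − vech Σ)`. -/
def Ftilde {p : ℕ} (Q S : Matrix (Fin p) (Fin p) ℝ) : ℝ :=
  (vech Q - vech S) ⬝ᵥ (Vtilde Q S).mulVec (vech Q - vech S)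

/-- An `r`-dimensional standard Wiener process. -/
structure IsStdWiener {Ω : Type*} [MeasurableSpace Ω] (μ : Measure Ω) {r : ℕ}
    (W : ℝ → Ω → (Fin r → ℝ)) : Prop where
  meas : ∀ t, Measurable (W t)
  init : ∀ᵐ ω ∂μ, W 0 ω = 0
  cont : ∀ᵐ ω ∂μ, Continuous fun t => W t ω
  gauss_marginal : ∀ s t : ℝ, 0 ≤ s → s ≤ t → ∀ i : Fin r,
    μ.map (fun ω => W t ω i - W s ω i) = gaussianReal 0 (Real.toNNReal (t - s))
  indep_coords : ∀ s t : ℝ, 0 ≤ s → s ≤ t →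
    iIndepFun (fun i ω => W t ω i - W s ω i) μ
  indep_increments : ∀ (n : ℕ) (t : Fin (n + 1) → ℝ), Monotone t → 0 ≤ t 0 →
    iIndepFun (fun (i : Fin n) ω => W (t i.succ) ω - W (t i.castSucc) ω) μ

/-- Generic realized covariation of two (latent) processes based on `n` observations with
step size `h`. -/
def Qcov {Ω : Type*} {d1 d2 : ℕ} (Y : ℝ → Ω → (Fin d1 → ℝ)) (Z : ℝ → Ω → (Fin d2 → ℝ))
    (h : ℝ) (n : ℕ) (ω : Ω) : Matrix (Fin d1) (Fin d2) ℝ :=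
  ((n : ℝ) * h)⁻¹ • ∑ i ∈ Finset.range n,
    Matrix.vecMulVec (Y (((i : ℝ) + 1) * h) ω - Y ((i : ℝ) * h) ω)
      (Z (((i : ℝ) + 1) * h) ω - Z ((i : ℝ) * h) ω)

end SEM


section VmatAux

open MeasureTheory Matrix Set
open scoped Kronecker

lemma SEMAux.posDef_smul' {n : Type*} [Fintype n] {A : Matrix n n ℝ} (hA : A.PosDef) {c : ℝ}
    (hc : 0 < c) : (c • A).PosDef := by
  refine Matrix.PosDef.of_dotProduct_mulVec_pos ?_ (fun x hx => ?_)
  · unfold Matrix.IsHermitian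
    rw [conjTranspose_smul, hA.1]
    congr 1
  · rw [smul_mulVec, dotProduct_smul, smul_eq_mul]
    exact mul_pos hc (hA.dotProduct_mulVec_pos hx)

lemma SEMAux.posDef_kron {n : Type*} [Fintype n] [DecidableEq n] {A B : Matrix n n ℝ}
    (hA : A.PosDef) (hB : B.PosDef) : (A ⊗ₖ B).PosDef := by
  exact hA.kronecker hB

lemma SEMAux.sum_indicator_pair {ι : Type*} [Fintype ι] [DecidableEq ι] (u v : ι) :
    ∑ ij : ι, (if ij = u ∨ ij = v then (1:ℝ) else 0) = if u = v then 1 else 2 := by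
  have h : ∀ ij : ι, (ij = u ∨ ij = v) ↔ ij ∈ ({u, v} : Finset ι) := by simp
  simp only [h]
  rw [Finset.sum_ite_mem, Finset.univ_inter, Finset.sum_const]
  by_cases huv : u = v <;>
    simp [huv, Finset.card_pair, Finset.card_insert_of_notMem]

lemma SEMAux.dup_gram (p : ℕ) :
    (SEM.dupMat p)ᵀ * SEM.dupMat p =
      Matrix.diagonal (fun a : SEM.VechIdx p => if a.1.1 = a.1.2 then (1:ℝ) else 2) := by
  ext a b
  rw [Matrix.mul_apply]
  by_cases hab : a = b
  · subst hab
    simp only [Matrix.diagonal_apply_eq]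
    have h2 : ∀ ij : Fin p × Fin p,
        (SEM.dupMat p)ᵀ a ij * SEM.dupMat p ij a =
          (if ij = a.1 ∨ ij = (a.1.2, a.1.1) then (1:ℝ) else 0) := by
      intro ij
      simp only [SEM.dupMat, Matrix.transpose_apply, Matrix.of_apply, Prod.ext_iff]
      split_ifs <;> simp_all
    rw [Finset.sum_congr rfl (fun ij _ => h2 ij), SEMAux.sum_indicator_pair]
    have h3 : (a.1 = (a.1.2, a.1.1)) ↔ (a.1.1 = a.1.2) := by
      constructor
      · intro h; exact congrArg Prod.fst h
      · intro h; exact Prod.ext h h.symm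
    simp [h3]
  · rw [Matrix.diagonal_apply_ne _ hab]
    apply Finset.sum_eq_zero
    intro ij _
    simp only [SEM.dupMat, Matrix.transpose_apply, Matrix.of_apply]
    rcases a with ⟨⟨a1, a2⟩, ha⟩
    rcases b with ⟨⟨b1, b2⟩, hb⟩
    rcases ij with ⟨i, j⟩
    split_ifs with h1 h2 <;> try ring
    exfalso
    apply hab
    simp only [Prod.ext_iff] at h1 h2
    simp only [Fin.le_def] at ha hb
    apply Subtype.ext
    simp only [Prod.ext_iff, Fin.ext_iff] at *
    omega

lemma SEMAux.dup_gram_isUnit (p : ℕ) : IsUnit ((SEM.dupMat p)ᵀ * SEM.dupMat p).det := by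
  rw [SEMAux.dup_gram, Matrix.det_diagonal, isUnit_iff_ne_zero]
  apply Finset.prod_ne_zero_iff.mpr
  intro a _
  split_ifs <;> norm_num

lemma SEMAux.dupPinv_mul_dupMat (p : ℕ) : SEM.dupPinv p * SEM.dupMat p = 1 := by
  rw [SEM.dupPinv, Matrix.mul_assoc, Matrix.nonsing_inv_mul _ (SEMAux.dup_gram_isUnit p)]

lemma SEMAux.dupPinvT_mulVec_ne_zero (p : ℕ) {v : SEM.VechIdx p → ℝ} (hv : v ≠ 0) :
    (SEM.dupPinv p)ᵀ *ᵥ v ≠ 0 := by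
  intro h
  apply hv
  have h2 : (SEM.dupMat p)ᵀ *ᵥ ((SEM.dupPinv p)ᵀ *ᵥ v) = v := by
    rw [Matrix.mulVec_mulVec, ← Matrix.transpose_mul, SEMAux.dupPinv_mul_dupMat,
      Matrix.transpose_one, Matrix.one_mulVec]
  rw [h, Matrix.mulVec_zero] at h2
  exact h2.symm

lemma SEMAux.quad_sum {ι : Type*} [Fintype ι] (A : Matrix ι ι ℝ) (u : ι → ℝ) :
    u ⬝ᵥ (A *ᵥ u) = ∑ z : ι × ι, (u z.1 * u z.2) * A z.1 z.2 := by
  rw [Fintype.sum_prod_type]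
  simp only [dotProduct, mulVec, Finset.mul_sum]
  apply Finset.sum_congr rfl; intro x _
  apply Finset.sum_congr rfl; intro y _
  ring

end VmatAux

theorem Vmat_posDef {p : ℕ} (hp : 1 ≤ p) (X Y : Matrix (Fin p) (Fin p) ℝ)
    (hX : X.PosDef) (hY : Y.PosDef) : (SEM.Vmat X Y).PosDef := by
  classical
  set Mf : ℝ → Matrix (Fin p) (Fin p) ℝ := fun t => Y + t • (X - Y) with hMf
  have hXs : Xᵀ = X := (Matrix.conjTranspose_eq_transpose_of_trivial X) ▸ hX.1
  have hYs : Yᵀ = Y := (Matrix.conjTranspose_eq_transpose_of_trivial Y) ▸ hY.1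
  have hMpos : ∀ t ∈ Set.Icc (0:ℝ) 1, (Mf t).PosDef := by
    intro t ht
    rcases eq_or_lt_of_le ht.1 with h0 | h0
    · simpa [Mf, ← h0] using hY
    rcases eq_or_lt_of_le ht.2 with h1 | h1
    · have : Mf t = X := by
        simp only [Mf, h1, one_smul]
        abel
      rw [this]; exact hX
    · have : Mf t = (1 - t) • Y + t • X := by
        simp only [Mf, smul_sub, sub_smul, one_smul]
        abel
      rw [this]
      exact (SEMAux.posDef_smul' hY (by linarith)).add (SEMAux.posDef_smul' hX h0)
  have hMsymm : ∀ t, (Mf t)ᵀ = Mf t := by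
    intro t
    simp only [Mf, Matrix.transpose_add, Matrix.transpose_smul, Matrix.transpose_sub, hXs, hYs]
  have hKsymm : ∀ (t : ℝ) (i j : Fin p), (Mf t)⁻¹ i j = (Mf t)⁻¹ j i := by
    intro t i j
    have h1 : ((Mf t)⁻¹)ᵀ = (Mf t)⁻¹ := by
      rw [Matrix.transpose_nonsing_inv, hMsymm]
    conv_lhs => rw [← h1]
    rw [Matrix.transpose_apply]
  have hMcont : Continuous Mf := continuous_const.add (continuous_id.smul continuous_const)
  have hdetne : ∀ t ∈ Set.Icc (0:ℝ) 1, (Mf t).det ≠ 0 := fun t ht => (hMpos t ht).det_pos.ne'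
  have hKcontOn : ∀ i j, ContinuousOn (fun t => (Mf t)⁻¹ i j) (Set.Icc (0:ℝ) 1) := by
    intro i j
    have h1 : ∀ t, (Mf t)⁻¹ i j = ((Mf t).det)⁻¹ * (Mf t).adjugate i j := by
      intro t
      rw [Matrix.inv_def, Ring.inverse_eq_inv', Matrix.smul_apply, smul_eq_mul]
    simp only [h1]
    exact ((hMcont.matrix_det.continuousOn.inv₀ hdetne).mul
      ((hMcont.matrix_adjugate.matrix_elem i j).continuousOn))
  set cl : ℝ → ℝ := fun u => max 0 (min u 1) with hcl
  have hclmem : ∀ u, cl u ∈ Set.Icc (0:ℝ) 1 :=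
    fun u => ⟨le_max_left _ _, max_le zero_le_one (min_le_right _ _)⟩
  have hcleq : ∀ u ∈ Set.Icc (0:ℝ) 1, cl u = u := by
    intro u hu
    simp only [cl, min_eq_left hu.2, max_eq_right hu.1]
  have hclcont : Continuous cl := continuous_const.max (continuous_id.min continuous_const)
  set Kc : ℝ → Matrix (Fin p) (Fin p) ℝ := fun u => (Mf (cl u))⁻¹ with hKc
  have hKcCont : ∀ i j, Continuous fun u => Kc u i j :=
    fun i j => (hKcontOn i j).comp_continuous hclcont hclmem
  have hKcPos : ∀ u, (Kc u).PosDef := fun u => (hMpos _ (hclmem u)).inv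
  refine Matrix.PosDef.of_dotProduct_mulVec_pos ?_ ?_
  · rw [Matrix.IsHermitian, Matrix.conjTranspose_eq_transpose_of_trivial]
    unfold SEM.Vmat
    rw [Matrix.transpose_mul, Matrix.transpose_mul, Matrix.transpose_transpose, Matrix.mul_assoc]
    congr 1
    congr 1
    ext x y
    simp only [Matrix.transpose_apply, Matrix.of_apply]
    have h2 : ∀ l1 l2 : ℝ,
        l2 * (((Y + (l1 * l2) • (X - Y))⁻¹ ⊗ₖ (Y + (l1 * l2) • (X - Y))⁻¹) y x) =
        l2 * (((Y + (l1 * l2) • (X - Y))⁻¹ ⊗ₖ (Y + (l1 * l2) • (X - Y))⁻¹) x y) := by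
      intro l1 l2
      simp only [Matrix.kroneckerMap_apply]
      rw [hKsymm (l1 * l2) y.1 x.1, hKsymm (l1 * l2) y.2 x.2]
    simp only [h2]
  · intro v hv
    have hsv : star v = v := funext fun i => star_trivial _
    rw [hsv]
    set w : (Fin p × Fin p) → ℝ := (SEM.dupPinv p)ᵀ *ᵥ v with hwdef
    have hw : w ≠ 0 := SEMAux.dupPinvT_mulVec_ne_zero p hv
    set q : ℝ → ℝ := fun u =>
      ∑ z : (Fin p × Fin p) × (Fin p × Fin p), (w z.1 * w z.2) * (Kc u z.1.1 z.2.1 * Kc u z.1.2 z.2.2) with hq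
    have hqeq : ∀ u, q u = w ⬝ᵥ ((Kc u ⊗ₖ Kc u) *ᵥ w) := by
      intro u
      rw [SEMAux.quad_sum]
      apply Finset.sum_congr rfl
      intro z _
      simp only [Matrix.kroneckerMap_apply]
    have hqpos : ∀ u, 0 < q u := by
      intro u
      rw [hqeq]
      have h3 := (SEMAux.posDef_kron (hKcPos u) (hKcPos u)).dotProduct_mulVec_pos hw
      have hsw : star w = w := funext fun i => star_trivial _
      rwa [hsw] at h3
    have hqcont : Continuous q := by
      apply continuous_finset_sum
      intro z _
      exact continuous_const.mul ((hKcCont _ _).mul (hKcCont _ _))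
    set F : ((Fin p × Fin p) × (Fin p × Fin p)) → ℝ → ℝ → ℝ := fun z l1 l2 =>
      l2 * (Kc (l1 * l2) z.1.1 z.2.1 * Kc (l1 * l2) z.1.2 z.2.2) with hF
    have hFcont : ∀ z, Continuous (Function.uncurry (F z)) := by
      intro z
      apply continuous_snd.mul
      have hm : Continuous (fun r : ℝ × ℝ => r.1 * r.2) := continuous_fst.mul continuous_snd
      exact ((hKcCont _ _).comp hm).mul ((hKcCont _ _).comp hm)
    set IF : ((Fin p × Fin p) × (Fin p × Fin p)) → ℝ → ℝ := fun z l1 => ∫ l2 in (0:ℝ)..1, F z l1 l2 with hIF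
    have hIFcont : ∀ z, Continuous (IF z) := fun z =>
      intervalIntegral.continuous_parametric_intervalIntegral_of_continuous' (μ := volume)
        (hFcont z) 0 1
    set G : ℝ → ℝ := fun l1 => ∑ z : (Fin p × Fin p) × (Fin p × Fin p), (w z.1 * w z.2) * IF z l1 with hG
    have hGcont : Continuous G :=
      continuous_finset_sum _ fun z _ => continuous_const.mul (hIFcont z)
    have hGrep : ∀ l1, G l1 = ∫ l2 in (0:ℝ)..1, l2 * q (l1 * l2) := by
      intro l1
      have h1 : ∀ z : (Fin p × Fin p) × (Fin p × Fin p), (w z.1 * w z.2) * IF z l1 =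
          ∫ l2 in (0:ℝ)..1, (w z.1 * w z.2) * F z l1 l2 := by
        intro z
        rw [intervalIntegral.integral_const_mul]
      simp only [hG]
      rw [Finset.sum_congr rfl (fun z _ => h1 z), ← intervalIntegral.integral_finset_sum]
      · have h2 : ∀ l2 : ℝ, (∑ z : (Fin p × Fin p) × (Fin p × Fin p), (w z.1 * w z.2) * F z l1 l2) = l2 * q (l1 * l2) := by
          intro l2
          rw [hq, Finset.mul_sum]
          apply Finset.sum_congr rfl
          intro z _
          simp only [hF]
          ring
        simp only [h2]
      · intro z _
        exact (continuous_const.mul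
          ((hFcont z).comp (Continuous.prodMk continuous_const continuous_id))).intervalIntegrable _ _
    have hGpos : ∀ l1, 0 < G l1 := by
      intro l1
      rw [hGrep]
      apply intervalIntegral.intervalIntegral_pos_of_pos_on
      · exact (continuous_id.mul
          (hqcont.comp (continuous_const.mul continuous_id))).intervalIntegrable _ _
      · intro x hx
        exact mul_pos hx.1 (hqpos _)
      · exact zero_lt_one
    set Bc : Matrix (Fin p × Fin p) (Fin p × Fin p) ℝ := Matrix.of (fun x y : Fin p × Fin p => ∫ l1 in (0:ℝ)..1, IF (x, y) l1) with hBc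
    have hVeq : SEM.Vmat X Y = SEM.dupPinv p * Bc * (SEM.dupPinv p)ᵀ := by
      unfold SEM.Vmat
      congr 1
      congr 1
      ext x y
      simp only [Matrix.of_apply, hBc, hIF]
      apply intervalIntegral.integral_congr
      intro l1 hl1
      rw [Set.uIcc_of_le zero_le_one] at hl1
      apply intervalIntegral.integral_congr
      intro l2 hl2
      rw [Set.uIcc_of_le zero_le_one] at hl2
      have hmem : l1 * l2 ∈ Set.Icc (0:ℝ) 1 :=
        ⟨mul_nonneg hl1.1 hl2.1, by nlinarith [hl1.1, hl1.2, hl2.1, hl2.2]⟩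
      have hcle : cl (l1 * l2) = l1 * l2 := hcleq _ hmem
      simp only [hF, hKc, hcle, Matrix.kroneckerMap_apply, Mf]
    rw [hVeq, ← Matrix.mulVec_mulVec, ← Matrix.mulVec_mulVec, Matrix.dotProduct_mulVec]
    have hvw : v ᵥ* SEM.dupPinv p = w := by
      rw [hwdef, Matrix.mulVec_transpose]
    rw [hvw, SEMAux.quad_sum]
    have h4 : ∀ z : (Fin p × Fin p) × (Fin p × Fin p), (w z.1 * w z.2) * Bc z.1 z.2 =
        ∫ l1 in (0:ℝ)..1, (w z.1 * w z.2) * IF z l1 := by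
      intro z
      rw [intervalIntegral.integral_const_mul]
      congr 1
    rw [Finset.sum_congr rfl (fun z _ => h4 z), ← intervalIntegral.integral_finset_sum]
    · apply intervalIntegral.intervalIntegral_pos_of_pos_on
      · exact hGcont.intervalIntegrable _ _
      · intro x _
        exact hGpos x
      · exact zero_lt_one
    · intro z _
      exact (continuous_const.mul (hIFcont z)).intervalIntegrable _ _
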